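/- For every N ∈ ℕ, the coherent spin states resolve the identity on the symmetric subspace: ((N+1)/(4π)) ∫_{S²} |Ω⟩⟨Ω|_N dΩ equals the identity operator on Sym^N(ℂ²). -/

import Mathlib

open scoped ComplexConjugate
open MeasureTheory Filter Topology

noncomputable section

/-! ## Setting

`M₂(ℂ)^{⊗N}` is realized as matrices indexed by `Fin N → Fin 2`, acting on
`(ℂ²)^{⊗N} = EuclideanSpace ℂ (Fin N → Fin 2)`. -/

/-- `M₂(ℂ)^{⊗N}`, realized as matrices indexed by `Fin N → Fin 2`. -/
abbrev TP (N : ℕ) : Type := Matrix (Fin N → Fin 2) (Fin N → Fin 2) ℂ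

/-- The Pauli matrices `σ₁, σ₂, σ₃`. -/
def pauli : Fin 3 → Matrix (Fin 2) (Fin 2) ℂ
  | 0 => !![0, 1; 1, 0]
  | 1 => !![0, -Complex.I; Complex.I, 0]
  | 2 => !![1, 0; 0, -1]

/-- The symmetrization operator `S_N` on `M₂(ℂ)^{⊗N}`: the average over all permutations
of the tensor factors. -/
def symmMat (N : ℕ) (A : TP N) : TP N :=
  (N.factorial : ℂ)⁻¹ • ∑ σ : Equiv.Perm (Fin N), Matrix.of fun i j => A (i ∘ σ) (j ∘ σ)

/-- `b ⊗ I₂^{⊗(N−M)}` (junk value `0` if `M > N`). -/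
def embedMat (M N : ℕ) (b : TP M) : TP N :=
  if h : M ≤ N then
    Matrix.of fun i j =>
      b (fun k => i (Fin.castLE h k)) (fun k => j (Fin.castLE h k)) *
        ∏ k ∈ Finset.univ.filter (fun k : Fin N => M ≤ (k : ℕ)),
          (if i k = j k then (1 : ℂ) else 0)
  else 0

/-- `S_{M,N}(b) = S_N(b ⊗ I₂^{⊗(N−M)})`. -/
def SMN (M N : ℕ) (b : TP M) : TP N := symmMat N (embedMat M N b)

/-- The elementary tensor `σ_{m 0} ⊗ ⋯ ⊗ σ_{m (L-1)}` as a matrix on `(ℂ²)^{⊗L}`. -/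
def pauliTensor {L : ℕ} (m : Fin L → Fin 3) : TP L :=
  Matrix.of fun i j => ∏ k, pauli (m k) (i k) (j k)

/-- For a monomial with exponents `d`, the list of its variable indices (first `d 0` copies
of `0`, then `d 1` copies of `1`, then `d 2` copies of `2`). -/
def monFun (d : Fin 3 →₀ ℕ) : Fin (d 0 + d 1 + d 2) → Fin 3 := fun k =>
  if (k : ℕ) < d 0 then 0 else if (k : ℕ) < d 0 + d 1 then 1 else 2

/-- Quantization of the monomial `x^{d 0} y^{d 1} z^{d 2}`:
`S_{L,N}(σ_{j₁} ⊗ ⋯ ⊗ σ_{j_L})` if `L ≤ N`, and `0` if `L > N`. -/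
def Qmon (N : ℕ) (d : Fin 3 →₀ ℕ) : TP N :=
  SMN (d 0 + d 1 + d 2) N (pauliTensor (monFun d))

/-- The quantization map `Q_{1/N}`: the linear extension of `Qmon` to all complex
polynomials in the three real variables `x, y, z`. -/
def Q (N : ℕ) (p : MvPolynomial (Fin 3) ℂ) : TP N :=
  ∑ d ∈ p.support, p.coeff d • Qmon N d

/-- The symmetric subspace `Sym^N(ℂ²) ⊆ (ℂ²)^{⊗N}` (the fixed points of the permutation
action, i.e. the range of the vector symmetrizer). -/
def SymSub (N : ℕ) : Submodule ℂ (EuclideanSpace ℂ (Fin N → Fin 2)) where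
  carrier := {v | ∀ σ : Equiv.Perm (Fin N), ∀ i, v (i ∘ σ) = v i}
  add_mem' := by
    intro a b ha hb σ i
    have : (a + b) (i ∘ σ) = a (i ∘ σ) + b (i ∘ σ) := rfl
    rw [this, ha σ i, hb σ i]; rfl
  zero_mem' := by intro σ i; rfl
  smul_mem' := by
    intro c v hv σ i
    have : (c • v) (i ∘ σ) = c • (v (i ∘ σ)) := rfl
    rw [this, hv σ i]; rfl

/-- The vector symmetrizer. -/
def symVec (N : ℕ) (v : EuclideanSpace ℂ (Fin N → Fin 2)) :
    EuclideanSpace ℂ (Fin N → Fin 2) :=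
  WithLp.toLp 2 fun i => (N.factorial : ℂ)⁻¹ * ∑ σ : Equiv.Perm (Fin N), v (i ∘ σ)

lemma symVec_mem (N : ℕ) (v : EuclideanSpace ℂ (Fin N → Fin 2)) :
    symVec N v ∈ SymSub N := by
  intro τ i
  show (N.factorial : ℂ)⁻¹ * ∑ σ : Equiv.Perm (Fin N), v ((i ∘ τ) ∘ σ)
      = (N.factorial : ℂ)⁻¹ * ∑ σ : Equiv.Perm (Fin N), v (i ∘ σ)
  congr 1
  exact Fintype.sum_equiv (Equiv.mulLeft τ) _ _ (fun σ => by rfl)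

/-- The vector symmetrizer as a linear map onto the symmetric subspace. -/
def symProj (N : ℕ) : EuclideanSpace ℂ (Fin N → Fin 2) →ₗ[ℂ] SymSub N where
  toFun v := ⟨symVec N v, symVec_mem N v⟩
  map_add' v w := by
    apply Subtype.ext
    apply WithLp.ofLp_injective
    funext i
    show (N.factorial : ℂ)⁻¹ * ∑ σ : Equiv.Perm (Fin N), (v + w) (i ∘ σ) = _
    have h : ∀ σ : Equiv.Perm (Fin N), (v + w) (i ∘ σ) = v (i ∘ σ) + w (i ∘ σ) :=
      fun _ => rfl
    simp only [h, Finset.sum_add_distrib]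
    show _ = (N.factorial : ℂ)⁻¹ * (∑ σ : Equiv.Perm (Fin N), v (i ∘ σ))
        + (N.factorial : ℂ)⁻¹ * (∑ σ : Equiv.Perm (Fin N), w (i ∘ σ))
    ring
  map_smul' c v := by
    apply Subtype.ext
    apply WithLp.ofLp_injective
    funext i
    show (N.factorial : ℂ)⁻¹ * ∑ σ : Equiv.Perm (Fin N), (c • v) (i ∘ σ) = _
    have h : ∀ σ : Equiv.Perm (Fin N), (c • v) (i ∘ σ) = c * v (i ∘ σ) := fun _ => rfl
    simp only [h, ← Finset.mul_sum]
    show _ = c * ((N.factorial : ℂ)⁻¹ * (∑ σ : Equiv.Perm (Fin N), v (i ∘ σ)))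
    ring

/-- The restriction (compression) of a matrix `A` on `(ℂ²)^{⊗N}` to the symmetric subspace
`Sym^N(ℂ²)`, as a continuous linear operator; when `A` leaves `Sym^N(ℂ²)` invariant (as do
all operators considered here) this is exactly the restriction `A|_{Sym^N(ℂ²)}`. -/
def restrSym (N : ℕ) (A : TP N) : SymSub N →L[ℂ] SymSub N :=
  LinearMap.toContinuousLinearMap
    ((symProj N) ∘ₗ (Matrix.toEuclideanLin A) ∘ₗ (SymSub N).subtype)

/-- The unit sphere `S² ⊂ ℝ³`. -/
abbrev S2 : Type := Metric.sphere (0 : EuclideanSpace ℝ (Fin 3)) 1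

/-- Spherical coordinates `(θ, φ) ↦ (sin θ cos φ, sin θ sin φ, cos θ)`. -/
def sphCoord (a : ℝ × ℝ) : EuclideanSpace ℝ (Fin 3) :=
  WithLp.toLp 2 ![Real.sin a.1 * Real.cos a.2, Real.sin a.1 * Real.sin a.2, Real.cos a.1]

lemma sphCoord_mem (a : ℝ × ℝ) :
    sphCoord a ∈ Metric.sphere (0 : EuclideanSpace ℝ (Fin 3)) 1 := by
  have h : ‖sphCoord a‖ = 1 := by
    rw [EuclideanSpace.norm_eq]
    have : ∑ i : Fin 3, sphCoord a i ^ 2 = 1 := by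
      have hs := Real.sin_sq_add_cos_sq a.1
      have hc := Real.sin_sq_add_cos_sq a.2
      simp [sphCoord, Fin.sum_univ_three]
      nlinarith [hs, hc]
    have h2 : ∀ i : Fin 3, ‖sphCoord a i‖ ^ 2 = sphCoord a i ^ 2 := fun i => sq_abs _
    simp only [h2, this]
    exact Real.sqrt_one
  simpa [mem_sphere_iff_norm] using h

/-- The standard surface measure `dΩ` on `S²` (of total mass `4π`), realized as the
push-forward of `sin θ dθ dφ` on `[0,π] × (−π,π]` under spherical coordinates. -/
def μS2 : Measure S2 :=
  Measure.map (fun a : ℝ × ℝ => (⟨sphCoord a, sphCoord_mem a⟩ : S2))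
    (((volume : Measure (ℝ × ℝ)).restrict
        (Set.Icc (0 : ℝ) Real.pi ×ˢ Set.Ioc (-Real.pi) Real.pi)).withDensity
      fun a => ENNReal.ofReal (Real.sin a.1))

/-- The polar angle `θ ∈ [0, π]` of a point of `S²`. -/
def thetaOf (Ω : S2) : ℝ := Real.arccos ((Ω : EuclideanSpace ℝ (Fin 3)) 2)

/-- The azimuthal angle `φ ∈ (−π, π]` of a point of `S²`. -/
def phiOf (Ω : S2) : ℝ :=
  Complex.arg (((Ω : EuclideanSpace ℝ (Fin 3)) 0 : ℂ) +
    ((Ω : EuclideanSpace ℝ (Fin 3)) 1 : ℂ) * Complex.I)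

/-- The coherent spin state `|Ω⟩₁ = cos(θ/2) e₁ + e^{iφ} sin(θ/2) e₂ ∈ ℂ²`. -/
def cs1 (Ω : S2) : Fin 2 → ℂ :=
  ![(Real.cos (thetaOf Ω / 2) : ℂ),
    Complex.exp (Complex.I * (phiOf Ω : ℂ)) * (Real.sin (thetaOf Ω / 2) : ℂ)]

/-- The `N`-fold coherent spin state `|Ω⟩_N = |Ω⟩₁^{⊗N} ∈ (ℂ²)^{⊗N}`. -/
def csN (N : ℕ) (Ω : S2) : EuclideanSpace ℂ (Fin N → Fin 2) :=
  WithLp.toLp 2 fun i => ∏ k, cs1 Ω (i k)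

/-- The matrix of the weak integral `((N+1)/(4π)) ∫_{S²} f(Ω) |Ω⟩⟨Ω|_N dΩ` on `(ℂ²)^{⊗N}`
(entrywise Bochner integral, which in finite dimension coincides with the weak integral). -/
def Q'mat (N : ℕ) (f : S2 → ℂ) : TP N :=
  Matrix.of fun i j =>
    ((N + 1 : ℂ) / (4 * (Real.pi : ℂ))) * ∫ Ω, f Ω * csN N Ω i * conj (csN N Ω j) ∂μS2

/-- The coherent-state (Berezin) quantization map `Q'_{1/N}`, as an operator on
`Sym^N(ℂ²)` (the range of `|Ω⟩⟨Ω|_N` lies in `Sym^N(ℂ²)`, so the compression coincides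
with the operator defined by the weak integral). -/
def Q' (N : ℕ) (f : S2 → ℂ) : SymSub N →L[ℂ] SymSub N := restrSym N (Q'mat N f)

/-- The restriction of a polynomial (in three real variables) to the unit sphere `S²`. -/
def restrictS2 (p : MvPolynomial (Fin 3) ℂ) : S2 → ℂ :=
  fun Ω => MvPolynomial.eval (fun i => ((Ω : EuclideanSpace ℝ (Fin 3)) i : ℂ)) p

/-- The restriction to `S²` as a linear map. -/
def restrictS2Lin : MvPolynomial (Fin 3) ℂ →ₗ[ℂ] (S2 → ℂ) where
  toFun := restrictS2
  map_add' p q := by funext Ω; simp [restrictS2]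
  map_smul' c p := by funext Ω; simp [restrictS2]

/-- `P_N(S²)`: the space of restrictions to `S²` of complex polynomials of degree `≤ N`
in three real variables. -/
def PNS2 (N : ℕ) : Submodule ℂ (S2 → ℂ) where
  carrier := {g | ∃ p : MvPolynomial (Fin 3) ℂ, p.totalDegree ≤ N ∧ g = restrictS2 p}
  add_mem' := by
    rintro a b ⟨p, hp, rfl⟩ ⟨q, hq, rfl⟩
    exact ⟨p + q, le_trans (MvPolynomial.totalDegree_add p q) (by omega),
      by funext Ω; simp [restrictS2]⟩
  zero_mem' := ⟨0, by simp, by funext Ω; simp [restrictS2]⟩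
  smul_mem' := by
    rintro c a ⟨p, hp, rfl⟩
    exact ⟨c • p, le_trans (MvPolynomial.totalDegree_smul_le c p) hp,
      by funext Ω; simp [restrictS2]⟩

/-- The `N`-fold tensor power `U^{⊗N}` of a `2×2` matrix, on `(ℂ²)^{⊗N}`. -/
def tpow (N : ℕ) (U : Matrix (Fin 2) (Fin 2) ℂ) : TP N :=
  Matrix.of fun i j => ∏ k, U (i k) (j k)

/-- `σ_k(j) = I₂ ⊗ ⋯ ⊗ σ_k ⊗ ⋯ ⊗ I₂` with the Pauli matrix `σ_k` in the `j`-th slot. -/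
def pauliAt (N : ℕ) (k : Fin 3) (j : Fin N) : TP N :=
  Matrix.of fun a b =>
    pauli k (a j) (b j) *
      ∏ t ∈ Finset.univ.filter (fun t : Fin N => t ≠ j), (if a t = b t then (1 : ℂ) else 0)

/-- The quantum Curie–Weiss Hamiltonian
`h^{CW}_{1/N} = (1/N)( −(J/(2N)) Σ_{i,j} σ₃(i)σ₃(j) − B Σ_j σ₁(j))`. -/
def hCW (J B : ℝ) (N : ℕ) : TP N :=
  ((N : ℂ))⁻¹ • ((-(J / (2 * N)) : ℂ) • ∑ i : Fin N, ∑ j : Fin N,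
      pauliAt N 2 i * pauliAt N 2 j
    + (-(B : ℂ)) • ∑ j : Fin N, pauliAt N 0 j)

open scoped Classical in
/-- The action of a (special orthogonal) matrix on the unit sphere `S²`
(junk value if the image does not lie on the sphere). -/
def rotAct (R : Matrix (Fin 3) (Fin 3) ℝ) (Ω : S2) : S2 :=
  if h : (WithLp.toLp 2 (R.mulVec (Ω : EuclideanSpace ℝ (Fin 3))) : EuclideanSpace ℝ (Fin 3)) ∈
      Metric.sphere (0 : EuclideanSpace ℝ (Fin 3)) 1
  then ⟨WithLp.toLp 2 (R.mulVec (Ω : EuclideanSpace ℝ (Fin 3))), h⟩ else Ω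

/-- A polynomial in three variables is harmonic if its Laplacian vanishes. -/
def IsHarmonic (p : MvPolynomial (Fin 3) ℂ) : Prop :=
  ∑ i : Fin 3, MvPolynomial.pderiv i (MvPolynomial.pderiv i p) = 0

/-- The polynomial `x² + y² + z² − 1`. -/
def sphPoly : MvPolynomial (Fin 3) ℂ :=
  MvPolynomial.X 0 ^ 2 + MvPolynomial.X 1 ^ 2 + MvPolynomial.X 2 ^ 2 - 1

/-- The Dicke state `|k, N−k⟩ ∈ Sym^N(ℂ²)`: `binom(N,k)^{-1/2}` times the sum of all
elementary tensors with exactly `k` factors `e₂` (and `N−k` factors `e₁`). -/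
def dicke (N k : ℕ) : EuclideanSpace ℂ (Fin N → Fin 2) :=
  WithLp.toLp 2 fun i => if (Finset.univ.filter fun t => i t = 1).card = k
    then ((Real.sqrt (N.choose k) : ℂ))⁻¹ else 0

/-- The operator norm of a matrix acting on `(ℂ²)^{⊗N}` with its Euclidean (ℓ²) norm. -/
def matOpNorm {N : ℕ} (A : TP N) : ℝ :=
  ‖LinearMap.toContinuousLinearMap (Matrix.toEuclideanLin A)‖


/-! In the standard basis of `(ℂ²)^{⊗N}`, the coordinate of `|Ω⟩_N` at a multi-index `i` with
`p` entries equal to `1` is `e^{ipφ} sin(θ/2)^p cos(θ/2)^{N-p}`. In spherical coordinates the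
`φ`-integral kills the entries of `∫ |Ω⟩⟨Ω|_N dΩ` between multi-indices of different weights, and
the `θ`-integral is a Beta integral, so that `((N+1)/(4π)) ∫ |Ω⟩⟨Ω|_N dΩ` has the entry
`p! (N-p)! / N! = 1 / C(N,p)` between any two multi-indices of weight `p`. A symmetric vector is
constant on each of the `C(N,p)` multi-indices of weight `p`, hence is fixed by this matrix. -/

open Finset Real
open scoped Nat Matrix

theorem Equiv.Perm.exists_comp_eq_of_card_fiber_eq {α β : Type*} [Fintype α] [DecidableEq β]
    {f g : α → β} (h : ∀ c, #{a | f a = c} = #{a | g a = c}) :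
    ∃ σ : Equiv.Perm α, g = f ∘ σ := by
  have e : ∀ c, {a // g a = c} ≃ {a // f a = c} := fun c =>
    Fintype.equivOfCardEq (by simp only [Fintype.card_subtype, h])
  exact ⟨Equiv.ofFiberEquiv e, funext fun a => (Equiv.ofFiberEquiv_map e a).symm⟩

section HammingNorm

variable {N : ℕ}

lemma hammingNorm_le (i : Fin N → Fin 2) : hammingNorm i ≤ N := by
  simpa using hammingNorm_le_card_fintype (x := i)

lemma card_filter_eq_one_eq_hammingNorm (i : Fin N → Fin 2) :
    #{k | i k = 1} = hammingNorm i :=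
  congrArg card (filter_congr fun _ _ => ⟨fun h => h ▸ one_ne_zero, Fin.eq_one_of_ne_zero _⟩)

lemma card_filter_eq_zero_eq_sub_hammingNorm (i : Fin N → Fin 2) :
    #{k | i k = 0} = N - hammingNorm i := by
  have h := card_filter_add_card_filter_not (s := univ) (fun k => i k = 0)
  simp only [card_univ, Fintype.card_fin, ← ne_eq] at h
  rw [hammingNorm]
  omega

lemma exists_perm_comp_eq_of_hammingNorm_eq {i j : Fin N → Fin 2}
    (h : hammingNorm i = hammingNorm j) : ∃ σ : Equiv.Perm (Fin N), j = i ∘ σ :=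
  Equiv.Perm.exists_comp_eq_of_card_fiber_eq <| Fin.forall_fin_two.2
    ⟨by simp only [card_filter_eq_zero_eq_sub_hammingNorm, h],
      by simp only [card_filter_eq_one_eq_hammingNorm, h]⟩

lemma prod_comp_eq_pow_hammingNorm {M : Type*} [CommMonoid M] (f : Fin 2 → M)
    (i : Fin N → Fin 2) : ∏ k, f (i k) = f 1 ^ hammingNorm i * f 0 ^ (N - hammingNorm i) := by
  have fiber (c : Fin 2) : ∏ k ∈ {k | i k = c}, f (i k) = f c ^ #{k | i k = c} := by
    rw [prod_congr rfl fun k hk => congrArg f (mem_filter.1 hk).2, prod_const]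
  rw [← prod_fiberwise univ i, Fin.prod_univ_two, fiber, fiber,
    card_filter_eq_zero_eq_sub_hammingNorm, card_filter_eq_one_eq_hammingNorm, mul_comm]

variable (N) in
lemma card_filter_hammingNorm_eq (p : ℕ) :
    #{i : Fin N → Fin 2 | hammingNorm i = p} = N.choose p := by
  rw [show N.choose p = #(powersetCard p (univ : Finset (Fin N))) by simp]
  refine card_nbij' (fun i => ({k | i k ≠ 0} : Finset (Fin N)))
    (fun s k => if k ∈ s then 1 else 0) ?_ ?_ ?_ ?_
  · intro i hi
    simpa [mem_powersetCard, hammingNorm] using hi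
  · intro s hs
    simpa [hammingNorm, filter_mem_eq_inter] using hs
  · intro i _
    funext k
    by_cases hk : i k = 0 <;> simp [hk, Fin.eq_one_of_ne_zero]
  · intro s _
    ext k
    by_cases hk : k ∈ s <;> simp [hk]

end HammingNorm

lemma SymSub.apply_eq_of_hammingNorm_eq {N : ℕ} {v : EuclideanSpace ℂ (Fin N → Fin 2)}
    (hv : v ∈ SymSub N) {i j : Fin N → Fin 2} (h : hammingNorm i = hammingNorm j) :
    v j = v i := by
  obtain ⟨σ, rfl⟩ := exists_perm_comp_eq_of_hammingNorm_eq h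
  exact hv σ i

lemma symVec_of_mem_SymSub {N : ℕ} {v : EuclideanSpace ℂ (Fin N → Fin 2)}
    (hv : v ∈ SymSub N) : symVec N v = v := by
  ext i
  simp only [symVec, hv _ i, sum_const, card_univ, Fintype.card_perm, Fintype.card_fin,
    nsmul_eq_mul]
  exact inv_mul_cancel_left₀ (Nat.cast_ne_zero.2 N.factorial_ne_zero) _

lemma csN_apply (N : ℕ) (Ω : S2) (i : Fin N → Fin 2) :
    csN N Ω i = cs1 Ω 1 ^ hammingNorm i * cs1 Ω 0 ^ (N - hammingNorm i) :=
  prod_comp_eq_pow_hammingNorm (cs1 Ω) i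

@[fun_prop]
lemma measurable_thetaOf : Measurable thetaOf := by
  unfold thetaOf; fun_prop

@[fun_prop]
lemma measurable_phiOf : Measurable phiOf :=
  Complex.measurable_arg.comp (by fun_prop)

@[fun_prop]
lemma measurable_csN_apply (N : ℕ) (i : Fin N → Fin 2) : Measurable fun Ω => csN N Ω i := by
  simp only [csN_apply, cs1, Matrix.cons_val_zero, Matrix.cons_val_one]
  fun_prop

def sphPoint (a : ℝ × ℝ) : S2 := ⟨sphCoord a, sphCoord_mem a⟩

lemma continuous_sphPoint : Continuous sphPoint := by
  unfold sphPoint sphCoord; fun_prop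

lemma thetaOf_sphPoint {a : ℝ × ℝ} (ha : a.1 ∈ Set.Icc 0 π) : thetaOf (sphPoint a) = a.1 := by
  simpa [thetaOf, sphPoint, sphCoord] using arccos_cos ha.1 ha.2

lemma phiOf_sphPoint {a : ℝ × ℝ} (h₁ : a.1 ∈ Set.Ioo 0 π) (h₂ : a.2 ∈ Set.Ioc (-π) π) :
    phiOf (sphPoint a) = a.2 := by
  convert Complex.arg_mul_cos_add_sin_mul_I (sin_pos_of_pos_of_lt_pi h₁.1 h₁.2) h₂ using 2
  simp [phiOf, sphPoint, sphCoord, mul_add, mul_assoc]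

/-- The poles `θ ∈ {0, π}` are discarded (a null set), so that `thetaOf` and `phiOf` invert the
spherical coordinates on the whole domain of integration. -/
lemma integral_μS2 {E : Type*} [NormedAddCommGroup E] [NormedSpace ℝ E] {f : S2 → E}
    (hf : AEStronglyMeasurable f μS2) :
    ∫ Ω, f Ω ∂μS2 = ∫ a in Set.Ioo 0 π ×ˢ Set.Ioc (-π) π, sin a.1 • f (sphPoint a) := by
  change ∫ Ω, f Ω ∂(Measure.map sphPoint _) = _
  rw [integral_map continuous_sphPoint.aemeasurable hf,
    integral_withDensity_eq_integral_toReal_smul (by fun_prop) (by simp), Measure.volume_eq_prod,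
    setIntegral_congr_set (Measure.set_prod_ae_eq (Ioo_ae_eq_Icc (μ := volume))
      (ae_eq_refl (Set.Ioc (-π) π))).symm]
  refine setIntegral_congr_fun (measurableSet_Ioo.prod measurableSet_Ioc) fun a ha => ?_
  rw [ENNReal.toReal_ofReal (sin_nonneg_of_nonneg_of_le_pi ha.1.1.le ha.1.2.le)]

lemma integral_exp_int_mul_I (n : ℤ) :
    ∫ x in (-π)..π, Complex.exp (n * Complex.I * x) = if n = 0 then (2 * π : ℂ) else 0 := by
  split_ifs with hn
  · simp [hn, two_mul]
  have hc : (n * Complex.I : ℂ) ≠ 0 := by simp [hn]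
  have hperiodic : Complex.exp (n * Complex.I * π) = Complex.exp (n * Complex.I * (-π : ℝ)) := by
    rw [show (n * Complex.I * π : ℂ) = n * Complex.I * (-π : ℝ) + n * (2 * π * Complex.I) by
      push_cast; ring, Complex.exp_add, Complex.exp_int_mul_two_pi_mul_I, mul_one]
  rw [integral_exp_mul_complex hc, hperiodic, sub_self, zero_div]

lemma integral_pow_mul_one_sub_pow (p m : ℕ) :
    ∫ x in (0 : ℝ)..1, x ^ p * (1 - x) ^ m = (p ! * m ! : ℝ) / (p + m + 1)! := by
  have h := Complex.betaIntegral_eq_Gamma_mul_div (p + 1) (m + 1) (by simp; positivity)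
    (by simp; positivity)
  simp only [Complex.betaIntegral, add_sub_cancel_right, Complex.cpow_natCast] at h
  rw [show (p + 1 + (m + 1) : ℂ) = ((p + m + 1 : ℕ) : ℂ) + 1 by push_cast; ring,
    Complex.Gamma_nat_eq_factorial, Complex.Gamma_nat_eq_factorial,
    Complex.Gamma_nat_eq_factorial] at h
  have h' : ((∫ x in (0 : ℝ)..1, x ^ p * (1 - x) ^ m : ℝ) : ℂ)
      = ((p ! * m ! / (p + m + 1)! : ℝ) : ℂ) := by
    rw [← intervalIntegral.integral_ofReal]; push_cast; exact h
  exact_mod_cast h'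

/-- Substitute `t = sin (θ / 2) ^ 2`, so that `dt = sin θ dθ / 2` and `1 - t = cos (θ / 2) ^ 2`. -/
lemma integral_sin_mul_cos_half_pow_mul_sin_half_pow (p m : ℕ) :
    ∫ θ in (0 : ℝ)..π, sin θ * cos (θ / 2) ^ (2 * m) * sin (θ / 2) ^ (2 * p)
      = 2 * ((p ! * m ! : ℝ) / (p + m + 1)!) := by
  have hderiv (θ : ℝ) : HasDerivAt (fun θ => sin (θ / 2) ^ 2) (sin θ / 2) θ := by
    refine (((hasDerivAt_id θ).div_const 2).sin.fun_pow 2).congr_deriv ?_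
    have h2 := sin_two_mul (θ / 2)
    rw [mul_div_cancel₀ _ two_ne_zero] at h2
    rw [h2]
    simp only [id, Nat.cast_ofNat]
    ring
  have hsubst := intervalIntegral.integral_comp_mul_deriv (a := 0) (b := π)
    (fun θ _ => hderiv θ) (by fun_prop : Continuous fun θ => sin θ / 2).continuousOn
    (by fun_prop : Continuous fun t : ℝ => 2 * (t ^ p * (1 - t) ^ m))
  simp only [Function.comp_def, zero_div, sin_zero, sin_pi_div_two, one_pow,
    ne_eq, OfNat.ofNat_ne_zero, not_false_eq_true, zero_pow] at hsubst
  calc ∫ θ in (0 : ℝ)..π, sin θ * cos (θ / 2) ^ (2 * m) * sin (θ / 2) ^ (2 * p)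
      = ∫ θ in (0 : ℝ)..π,
          2 * ((sin (θ / 2) ^ 2) ^ p * (1 - sin (θ / 2) ^ 2) ^ m) * (sin θ / 2) :=
        intervalIntegral.integral_congr fun θ _ => by
          simp only [← cos_sq', ← pow_mul]; ring
    _ = 2 * ((p ! * m ! : ℝ) / (p + m + 1)!) := by
      rw [hsubst, intervalIntegral.integral_const_mul, integral_pow_mul_one_sub_pow]

lemma sin_smul_csN_mul_conj_csN (N : ℕ) (i j : Fin N → Fin 2) {a : ℝ × ℝ}
    (h₁ : a.1 ∈ Set.Ioo 0 π) (h₂ : a.2 ∈ Set.Ioc (-π) π) :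
    sin a.1 • (csN N (sphPoint a) i * conj (csN N (sphPoint a) j))
      = ((sin a.1 * cos (a.1 / 2) ^ ((N - hammingNorm i) + (N - hammingNorm j))
            * sin (a.1 / 2) ^ (hammingNorm i + hammingNorm j) : ℝ) : ℂ)
        * Complex.exp (((hammingNorm i - hammingNorm j : ℤ) : ℂ) * Complex.I * a.2) := by
  have hphase : Complex.exp (Complex.I * a.2) ^ hammingNorm i
      * conj (Complex.exp (Complex.I * a.2)) ^ hammingNorm j
      = Complex.exp (((hammingNorm i - hammingNorm j : ℤ) : ℂ) * Complex.I * a.2) := by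
    rw [← Complex.exp_conj, ← Complex.exp_nat_mul, ← Complex.exp_nat_mul, ← Complex.exp_add]
    simp only [map_mul, Complex.conj_I, Complex.conj_ofReal]
    push_cast
    ring_nf
  rw [csN_apply, csN_apply, cs1, thetaOf_sphPoint (Set.Ioo_subset_Icc_self h₁),
    phiOf_sphPoint h₁ h₂, ← hphase]
  simp only [Matrix.cons_val_zero, Matrix.cons_val_one, map_mul, map_pow, Complex.conj_ofReal,
    Complex.real_smul]
  push_cast
  ring

lemma integral_csN_mul_conj_csN (N : ℕ) (i j : Fin N → Fin 2) :
    ∫ Ω, csN N Ω i * conj (csN N Ω j) ∂μS2 = if hammingNorm i = hammingNorm j then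
      4 * π * (((hammingNorm i)! * (N - hammingNorm i)! : ℕ) / (N + 1)! : ℂ) else 0 := by
  have hmeas : Measurable fun Ω => csN N Ω i * conj (csN N Ω j) := by fun_prop
  rw [integral_μS2 hmeas.aestronglyMeasurable,
    setIntegral_congr_fun (measurableSet_Ioo.prod measurableSet_Ioc)
      fun a ha => sin_smul_csN_mul_conj_csN N i j ha.1 ha.2,
    Measure.volume_eq_prod, setIntegral_prod_mul
      (fun θ : ℝ => ((sin θ * cos (θ / 2) ^ ((N - hammingNorm i) + (N - hammingNorm j))
        * sin (θ / 2) ^ (hammingNorm i + hammingNorm j) : ℝ) : ℂ))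
      (fun x : ℝ => Complex.exp (((hammingNorm i - hammingNorm j : ℤ) : ℂ) * Complex.I * x)),
    integral_complex_ofReal, ← intervalIntegral.integral_of_le (by linarith [pi_pos] : -π ≤ π),
    integral_exp_int_mul_I, ← integral_Ioc_eq_integral_Ioo,
    ← intervalIntegral.integral_of_le pi_pos.le]
  split_ifs with _ hpq hpq
  · rw [← hpq, ← two_mul, ← two_mul, integral_sin_mul_cos_half_pow_mul_sin_half_pow,
      Nat.add_sub_cancel' (hammingNorm_le i)]
    push_cast
    ring
  · omega
  · omega
  · simp

lemma Q'mat_one_apply (N : ℕ) (i j : Fin N → Fin 2) :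
    Q'mat N (fun _ => 1) i j = if hammingNorm i = hammingNorm j then
      (((hammingNorm i)! * (N - hammingNorm i)! : ℕ) / N ! : ℂ) else 0 := by
  simp only [Q'mat, Matrix.of_apply, one_mul, integral_csN_mul_conj_csN]
  split_ifs
  · have hπ : (π : ℂ) ≠ 0 := Complex.ofReal_ne_zero.2 pi_ne_zero
    rw [Nat.factorial_succ]
    push_cast
    field_simp
  · rw [mul_zero]

lemma Q'mat_one_mulVec_of_mem_SymSub {N : ℕ} {v : EuclideanSpace ℂ (Fin N → Fin 2)}
    (hv : v ∈ SymSub N) : Q'mat N (fun _ => 1) *ᵥ v.ofLp = v.ofLp := by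
  have hcard (i : Fin N → Fin 2) :
      #{j : Fin N → Fin 2 | hammingNorm i = hammingNorm j} = N.choose (hammingNorm i) := by
    simp_rw [eq_comm (a := hammingNorm i)]
    exact card_filter_hammingNorm_eq N _
  funext i
  simp only [Matrix.mulVec, dotProduct, Q'mat_one_apply, ite_mul, zero_mul, sum_ite,
    sum_const_zero, add_zero]
  rw [sum_congr rfl fun j hj => by rw [SymSub.apply_eq_of_hammingNorm_eq hv (mem_filter.1 hj).2],
    sum_const, hcard, nsmul_eq_mul, ← mul_assoc, ← mul_div_assoc, ← Nat.cast_mul, ← mul_assoc,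
    Nat.choose_mul_factorial_mul_factorial (hammingNorm_le i),
    div_self (Nat.cast_ne_zero.2 N.factorial_ne_zero), one_mul]

/-- resolution of the identity: for every `N`,
`((N+1)/(4π)) ∫_{S²} |Ω⟩⟨Ω|_N dΩ` is the identity on `Sym^N(ℂ²)`. -/
theorem coherent_states_resolution_of_identity (N : ℕ) :
    Q' N (fun _ => 1) = ContinuousLinearMap.id ℂ (SymSub N) := by
  ext v : 1
  apply Subtype.ext
  change symVec N (Matrix.toLpLin 2 2 (Q'mat N fun _ => 1) v) = v
  rw [Matrix.toLpLin_apply, Q'mat_one_mulVec_of_mem_SymSub v.2, WithLp.toLp_ofLp,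
    symVec_of_mem_SymSub v.2]

end
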